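/- Fix d ≥ 1 and λ ∈ W^d. For every n ≥ 0 and every μ ∈ ℤ^d with μ₁ ≥ μ₂ ≥ ⋯ ≥ μ_d ≥ 0 (the closure of W^d), the coefficient of x₁^{μ₁}⋯x_d^{μ_d} in the multivariate Laurent polynomial det( x_i^{λ_j} − x_i^{−λ_j} )_{1≤i,j≤d} · ( Σ_{i=1}^d (x_i + x_i^{−1}) )^n over ℚ equals b_n(λ;μ), the number of Weyl oscillating lattice walks of length n from λ to μ. -/

import Mathlib

open scoped BigOperators

/-- The `d`-dimensional Weyl chamber `W^d = {x ∈ ℤ^d : x₁ > x₂ > ⋯ > x_d > 0}`. -/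
def WeylChamber (d : ℕ) : Set (Fin d → ℤ) :=
  {x | (∀ i j : Fin d, i < j → x j < x i) ∧ ∀ i, 0 < x i}

/-- `q` is obtained from `p` by adding a positive or negative unit coordinate vector. -/
def IsUnitStep {d : ℕ} (p q : Fin d → ℤ) : Prop :=
  ∃ i : Fin d, q = p + Pi.single i 1 ∨ q = p - Pi.single i 1

/-- The number `b_n(λ;μ)` of Weyl oscillating lattice walks of length `n` from `lam`
to `mu`: sequences `lam = p⁰, p¹, …, pⁿ = mu` of points of `W^d` in which each
difference `p^{k+1} - p^k` is a positive or negative unit coordinate vector. -/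
noncomputable def oscWalkCount (d n : ℕ) (lam mu : Fin d → ℤ) : ℕ :=
  Nat.card {p : Fin (n + 1) → (Fin d → ℤ) //
    p 0 = lam ∧ p (Fin.last n) = mu ∧ (∀ k, p k ∈ WeylChamber d) ∧
    ∀ k : Fin n, IsUnitStep (p k.castSucc) (p k.succ)}

/-- The Laurent monomial `x^v` in the ring `ℚ[ℤ^d]` of Laurent polynomials in
`x₁, …, x_d` over `ℚ`. -/
noncomputable def laurentMono (d : ℕ) (v : Fin d → ℤ) : AddMonoidAlgebra ℚ (Fin d → ℤ) :=
  AddMonoidAlgebra.single v 1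

/-! The determinant is the alternating sum `∑ ± x^{wλ}` over signed permutations `w`, and the
step polynomial is invariant under signed permutations, so `det · S^n` is anti-invariant under the
reflections `μ_i ↔ μ_j` and `μ_i ↦ -μ_i`. Hence its coefficients vanish on the walls of the closed
chamber (reflection principle). Multiplying by `S` shifts coefficients exactly as appending a step
to a walk does, so on the closed chamber the coefficients and the walk counts satisfy the same
recursion; they agree initially because `x^λ` is the only monomial of the determinant whose
exponent lies in the closed chamber. -/

section Walks

variable {V : Type*}

def walksIn (R : Set V) (r : V → V → Prop) (n : ℕ) (a b : V) : Set (Fin (n + 1) → V) :=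
  {p | p 0 = a ∧ p (Fin.last n) = b ∧ (∀ k, p k ∈ R) ∧ ∀ k : Fin n, r (p k.castSucc) (p k.succ)}

variable {R : Set V} {r : V → V → Prop} {n : ℕ} {a b c : V}

lemma walksIn_eq_empty_of_notMem (hb : b ∉ R) : walksIn R r n a b = ∅ :=
  Set.eq_empty_of_forall_notMem fun _ hp => hb (hp.2.1 ▸ hp.2.2.1 _)

lemma walksIn_zero_subsingleton : (walksIn R r 0 a b).Subsingleton := fun p hp q hq =>
  funext fun k => by rw [Fin.fin_one_eq_zero k, hp.1, hq.1]

lemma card_walksIn_zero [DecidableEq V] (ha : a ∈ R) :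
    Nat.card (walksIn R r 0 a b) = if b = a then 1 else 0 := by
  split_ifs with hba
  · subst hba
    have hconst : (fun _ => b) ∈ walksIn R r 0 b b := ⟨rfl, rfl, fun _ => ha, Fin.elim0⟩
    rw [walksIn_zero_subsingleton.eq_singleton_of_mem hconst, Nat.card_unique]
  · have hempty : walksIn R r 0 a b = ∅ :=
      Set.eq_empty_of_forall_notMem fun p hp => hba (hp.2.1.symm.trans hp.1)
    rw [hempty, Nat.card_of_isEmpty]

lemma snoc_mem_walksIn {p : Fin (n + 1) → V} (hp : p ∈ walksIn R r n a c) (hcb : r c b)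
    (hb : b ∈ R) : (Fin.snoc p b : Fin (n + 2) → V) ∈ walksIn R r (n + 1) a b := by
  refine ⟨by rw [Fin.snoc_apply_zero, hp.1], Fin.snoc_last _ _, fun k => ?_, fun k => ?_⟩
  · induction k using Fin.lastCases with
    | last => rwa [Fin.snoc_last]
    | cast k => rw [Fin.snoc_castSucc]; exact hp.2.2.1 k
  · induction k using Fin.lastCases with
    | last => rw [Fin.succ_last, Fin.snoc_last, Fin.snoc_castSucc, hp.2.1]; exact hcb
    | cast k => rw [Fin.succ_castSucc, Fin.snoc_castSucc, Fin.snoc_castSucc]; exact hp.2.2.2 k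

lemma init_mem_walksIn {q : Fin (n + 2) → V} (hq : q ∈ walksIn R r (n + 1) a b) :
    Fin.init q ∈ walksIn R r n a (q (Fin.last n).castSucc) ∧ r (q (Fin.last n).castSucc) b := by
  refine ⟨⟨hq.1, rfl, fun k => hq.2.2.1 _, fun k => ?_⟩, ?_⟩
  · simpa only [Fin.init, Fin.succ_castSucc] using hq.2.2.2 k.castSucc
  · simpa only [Fin.succ_last, hq.2.1] using hq.2.2.2 (Fin.last n)

lemma snoc_init_of_mem_walksIn {q : Fin (n + 2) → V} (hq : q ∈ walksIn R r (n + 1) a b) :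
    Fin.snoc (Fin.init q) b = q :=
  (congrArg (Fin.snoc (Fin.init q)) hq.2.1).symm.trans (Fin.snoc_init_self q)

lemma walksIn_succ_subset :
    walksIn R r (n + 1) a b ⊆ (Fin.snoc · b) '' ⋃ c ∈ {c | r c b}, walksIn R r n a c := by
  intro q hq
  obtain ⟨hinit, hstep⟩ := init_mem_walksIn hq
  exact ⟨Fin.init q, Set.mem_biUnion hstep hinit, snoc_init_of_mem_walksIn hq⟩

lemma finite_walksIn (hr : ∀ b, {c | r c b}.Finite) (n : ℕ) (a b : V) :
    (walksIn R r n a b).Finite := by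
  induction n generalizing b with
  | zero => exact walksIn_zero_subsingleton.finite
  | succ n ih => exact (((hr b).biUnion fun c _ => ih c).image _).subset walksIn_succ_subset

lemma card_walksIn_succ {ι : Type*} [Fintype ι] {pred : ι → V} (hpred : pred.Injective)
    (hr : ∀ c, r c b ↔ ∃ s, pred s = c) (hfin : ∀ c, (walksIn R r n a c).Finite) (hb : b ∈ R) :
    Nat.card (walksIn R r (n + 1) a b) = ∑ s, Nat.card (walksIn R r n a (pred s)) := by
  let extend : (Σ s, walksIn R r n a (pred s)) → walksIn R r (n + 1) a b := fun x =>
    ⟨Fin.snoc x.2.1 b, snoc_mem_walksIn x.2.2 ((hr _).2 ⟨x.1, rfl⟩) hb⟩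
  have hextend : extend.Bijective := by
    refine ⟨fun ⟨s, p, hp⟩ ⟨t, q, hq⟩ h => ?_, fun ⟨q, hq⟩ => ?_⟩
    · have hpq : p = q := by
        simpa only [extend, Fin.init_snoc] using congrArg (fun x => Fin.init x.1) h
      refine Sigma.subtype_ext (hpred ?_) hpq
      rw [← hp.2.1, ← hq.2.1, hpq]
    · obtain ⟨hinit, hstep⟩ := init_mem_walksIn hq
      obtain ⟨s, hs⟩ := (hr _).1 hstep
      exact ⟨⟨s, Fin.init q, hs ▸ hinit⟩, Subtype.ext (snoc_init_of_mem_walksIn hq)⟩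
  have := fun s => (hfin (pred s)).to_subtype
  rw [← Nat.card_congr (Equiv.ofBijective extend hextend), Nat.card_sigma]

end Walks

section UnitSteps

variable {d n : ℕ} {lam mu : Fin d → ℤ}

def unitStep (s : Fin d × ℤˣ) : Fin d → ℤ := Pi.single s.1 (s.2 : ℤ)

lemma unitStep_injective : (unitStep (d := d)).Injective := by
  rintro ⟨i, u⟩ ⟨j, v⟩ h
  have hi := congrFun h i
  by_cases hij : i = j
  · subst hij
    simp only [unitStep, Pi.single_eq_same, Units.val_inj] at hi
    rw [hi]
  · simp [unitStep, hij] at hi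

lemma isUnitStep_iff {p q : Fin d → ℤ} : IsUnitStep p q ↔ ∃ s, q - unitStep s = p := by
  constructor
  · rintro ⟨i, h | h⟩
    · exact ⟨(i, 1), by simp [unitStep, h]⟩
    · exact ⟨(i, -1), by simp [unitStep, h, Pi.single_neg]⟩
  · rintro ⟨⟨i, u⟩, rfl⟩
    rcases Int.units_eq_one_or u with rfl | rfl
    · exact ⟨i, Or.inl (by simp [unitStep])⟩
    · exact ⟨i, Or.inr (by simp [unitStep, Pi.single_neg])⟩

lemma finite_setOf_isUnitStep (q : Fin d → ℤ) : {p | IsUnitStep p q}.Finite :=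
  (Set.finite_range fun s => q - unitStep s).subset fun _ hp => isUnitStep_iff.1 hp

lemma oscWalkCount_eq_card_walksIn :
    oscWalkCount d n lam mu = Nat.card (walksIn (WeylChamber d) IsUnitStep n lam mu) := rfl

lemma oscWalkCount_zero (hlam : lam ∈ WeylChamber d) :
    oscWalkCount d 0 lam mu = if mu = lam then 1 else 0 :=
  card_walksIn_zero hlam

lemma oscWalkCount_eq_zero_of_notMem (hmu : mu ∉ WeylChamber d) :
    oscWalkCount d n lam mu = 0 := by
  rw [oscWalkCount_eq_card_walksIn, walksIn_eq_empty_of_notMem hmu, Nat.card_of_isEmpty]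

lemma oscWalkCount_succ (hmu : mu ∈ WeylChamber d) :
    oscWalkCount d (n + 1) lam mu = ∑ s, oscWalkCount d n lam (mu - unitStep s) :=
  card_walksIn_succ (sub_right_injective.comp unitStep_injective) (fun _ => isUnitStep_iff)
    (finite_walksIn finite_setOf_isUnitStep n lam) hmu

lemma antitone_sub_unitStep (hmu : mu ∈ WeylChamber d) (s : Fin d × ℤˣ) :
    Antitone (mu - unitStep s) := by
  intro a b hab
  rcases hab.eq_or_lt with rfl | hlt
  · rfl
  have hgap := hmu.1 a b hlt
  obtain ⟨i, u⟩ := s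
  simp only [Pi.sub_apply, unitStep, Pi.single_apply]
  rcases Int.units_eq_one_or u with rfl | rfl <;> split_ifs <;> simp <;> omega

lemma nonneg_sub_unitStep (hmu : mu ∈ WeylChamber d) (s : Fin d × ℤˣ) : 0 ≤ mu - unitStep s := by
  intro a
  have hpos := hmu.2 a
  obtain ⟨i, u⟩ := s
  simp only [Pi.zero_apply, Pi.sub_apply, unitStep, Pi.single_apply]
  rcases Int.units_eq_one_or u with rfl | rfl <;> split_ifs <;> simp <;> omega

end UnitSteps

section Laurent

open AddMonoidAlgebra

lemma Fintype.sum_unitsInt {M : Type*} [AddCommMonoid M] (f : ℤˣ → M) :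
    ∑ u, f u = f 1 + f (-1) := by
  rw [UnitsInt.univ, Finset.sum_pair (by decide)]

lemma Finset.univ_sum_single_perm {ι M : Type*} [Fintype ι] [DecidableEq ι] [AddCommMonoid M]
    (σ : Equiv.Perm ι) (f : ι → M) : ∑ j, Pi.single (σ j) (f j) = f ∘ σ.symm := by
  rw [← Equiv.sum_comp σ.symm]
  simpa using Finset.univ_sum_single (f ∘ σ.symm)

lemma AddMonoidAlgebra.coeff_mul_sum_single {k G ι : Type*} [Semiring k] [AddCommGroup G]
    (f : AddMonoidAlgebra k G) (s : Finset ι) (v : ι → G) (b : G) :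
    (f * ∑ i ∈ s, single (v i) 1).coeff b = ∑ i ∈ s, f.coeff (b - v i) := by
  simp [Finset.mul_sum, coeff_sum, Finsupp.finsetSum_apply, sub_eq_add_neg]

lemma AddMonoidAlgebra.coeff_eq_zero_of_domCongr_eq_neg {k G : Type*} [CommRing k]
    [IsAddTorsionFree k] [AddMonoid G] {e : G ≃+ G} {f : AddMonoidAlgebra k G}
    (hf : domCongr k k e f = -f) {b : G} (hb : e.symm b = b) : f.coeff b = 0 := by
  have hcoeff := congrArg (fun g => g.coeff b) hf
  simp only [coeff_domCongr, hb, coeff_neg, Finsupp.neg_apply] at hcoeff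
  exact self_eq_neg.1 hcoeff

variable {d : ℕ}

noncomputable def stepPoly (d : ℕ) : AddMonoidAlgebra ℚ (Fin d → ℤ) :=
  ∑ i : Fin d, (laurentMono d (Pi.single i 1) + laurentMono d (Pi.single i (-1)))

lemma stepPoly_eq_sum_unitStep : stepPoly d = ∑ s, laurentMono d (unitStep s) := by
  simp only [stepPoly, Fintype.sum_prod_type, Fintype.sum_unitsInt, unitStep, Units.val_one,
    Units.val_neg]

lemma coeff_mul_stepPoly (f : AddMonoidAlgebra ℚ (Fin d → ℤ)) (b : Fin d → ℤ) :
    (f * stepPoly d).coeff b = ∑ s, f.coeff (b - unitStep s) := by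
  rw [stepPoly_eq_sum_unitStep]
  exact AddMonoidAlgebra.coeff_mul_sum_single f _ _ b

def signedPermCoords (σ : Equiv.Perm (Fin d)) (ε : Fin d → ℤˣ) :
    (Fin d → ℤ) ≃+ (Fin d → ℤ) where
  toFun x j := ε j * x (σ j)
  invFun y i := ε (σ.symm i) * y (σ.symm i)
  left_inv x := by funext i; simp [← mul_assoc]
  right_inv y := by funext i; simp [← mul_assoc]
  map_add' x y := by funext j; simp [mul_add]

variable (σ : Equiv.Perm (Fin d)) (ε : Fin d → ℤˣ)

lemma signedPermCoords_symm_apply (y : Fin d → ℤ) (i : Fin d) :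
    (signedPermCoords σ ε).symm y i = ε (σ.symm i) * y (σ.symm i) := rfl

lemma signedPermCoords_single (i : Fin d) (c : ℤ) :
    signedPermCoords σ ε (Pi.single i c) = Pi.single (σ.symm i) (ε (σ.symm i) * c) := by
  funext j
  by_cases h : σ j = i
  · subst h; simp [signedPermCoords]
  · simp [signedPermCoords, h, Equiv.eq_symm_apply]

lemma domCongr_signedPermCoords_stepPoly :
    domCongr ℚ ℚ (signedPermCoords σ ε) (stepPoly d) = stepPoly d := by
  rw [stepPoly_eq_sum_unitStep, map_sum]
  simp only [laurentMono, domCongr_single, unitStep, signedPermCoords_single]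
  exact Equiv.sum_comp (Equiv.prodShear σ.symm fun i => Equiv.mulLeft (ε (σ.symm i)))
    (fun s => laurentMono d (unitStep s))

noncomputable def signedAlternantMatrix (d : ℕ) (lam : Fin d → ℤ) :
    Matrix (Fin d) (Fin d) (AddMonoidAlgebra ℚ (Fin d → ℤ)) :=
  Matrix.of fun i j => laurentMono d (Pi.single i (lam j)) - laurentMono d (Pi.single i (-lam j))

variable (lam : Fin d → ℤ)

lemma mapMatrix_signedAlternantMatrix :
    (domCongr ℚ ℚ (signedPermCoords σ ε)).mapMatrix (signedAlternantMatrix d lam) =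
      Matrix.of fun i j => ((ε (σ.symm i) : ℤ) : AddMonoidAlgebra ℚ (Fin d → ℤ)) *
        (signedAlternantMatrix d lam).submatrix σ.symm id i j := by
  ext1 i j
  simp only [signedAlternantMatrix, AlgEquiv.mapMatrix_apply, Matrix.map_apply, Matrix.of_apply,
    Matrix.submatrix_apply, id, map_sub, laurentMono, domCongr_single, signedPermCoords_single]
  rcases Int.units_eq_one_or (ε (σ.symm i)) with h | h <;> simp [h]

lemma domCongr_signedPermCoords_det :
    domCongr ℚ ℚ (signedPermCoords σ ε) (signedAlternantMatrix d lam).det =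
      (((Equiv.Perm.sign σ * ∏ i, ε i : ℤˣ) : ℤ) : AddMonoidAlgebra ℚ (Fin d → ℤ)) *
        (signedAlternantMatrix d lam).det := by
  rw [AlgEquiv.map_det, mapMatrix_signedAlternantMatrix, Matrix.det_mul_column, Matrix.det_permute,
    Equiv.Perm.sign_symm,
    Equiv.prod_comp σ.symm fun i => ((ε i : ℤ) : AddMonoidAlgebra ℚ (Fin d → ℤ))]
  push_cast
  ring

lemma signedAlternantMatrix_apply (i j : Fin d) :
    signedAlternantMatrix d lam i j = ∑ u : ℤˣ, single (Pi.single i (u * lam j)) ((u : ℤ) : ℚ) := by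
  simp [signedAlternantMatrix, laurentMono, sub_eq_add_neg, single_neg]

lemma det_signedAlternantMatrix :
    (signedAlternantMatrix d lam).det = ∑ σ : Equiv.Perm (Fin d), ∑ ε : Fin d → ℤˣ,
      single ((fun j => (ε j : ℤ) * lam j) ∘ σ.symm)
        (((Equiv.Perm.sign σ * ∏ j, ε j : ℤˣ) : ℤ) : ℚ) := by
  rw [Matrix.det_apply]
  refine Finset.sum_congr rfl fun σ _ => ?_
  simp_rw [signedAlternantMatrix_apply, Fintype.prod_sum, prod_single, Finset.univ_sum_single_perm,
    Finset.smul_sum]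
  refine Finset.sum_congr rfl fun ε _ => ?_
  rw [Units.smul_def, smul_single]
  push_cast
  rfl

variable {σ ε lam}

lemma eq_one_and_eq_one_of_comp_symm_eq (hlam : lam ∈ WeylChamber d) {mu : Fin d → ℤ}
    (hmono : Antitone mu) (hpos : 0 ≤ mu)
    (h : (fun j => (ε j : ℤ) * lam j) ∘ σ.symm = mu) : σ = 1 ∧ ε = 1 := by
  have hcomp (j : Fin d) : (ε j : ℤ) * lam j = mu (σ j) := by simp [← h]
  have hε : ε = 1 := funext fun j => (Int.units_eq_one_or (ε j)).resolve_right fun hj => by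
    have hval := hcomp j
    rw [hj, Units.val_neg, Units.val_one, neg_one_mul] at hval
    have hmu_nonneg : 0 ≤ mu (σ j) := hpos (σ j)
    have hlam_pos := hlam.2 j
    omega
  have hσ : StrictMono σ := fun i j hij => lt_of_not_ge fun hle => by
    have hmu_le := hmono hle
    rw [← hcomp, ← hcomp, hε] at hmu_le
    simp only [Pi.one_apply, Units.val_one, one_mul] at hmu_le
    exact (hlam.1 i j hij).not_ge hmu_le
  exact ⟨Equiv.ext fun i => congrFun hσ.eq_id i, hε⟩

lemma coeff_det_signedAlternantMatrix (hlam : lam ∈ WeylChamber d) {mu : Fin d → ℤ}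
    (hmono : Antitone mu) (hpos : 0 ≤ mu) :
    (signedAlternantMatrix d lam).det.coeff mu = if mu = lam then 1 else 0 := by
  simp only [det_signedAlternantMatrix, coeff_sum, coeff_single, Finsupp.finsetSum_apply,
    Finsupp.single_apply]
  rw [Fintype.sum_eq_single 1 fun σ hσ => Finset.sum_eq_zero fun ε _ =>
      if_neg fun h => hσ (eq_one_and_eq_one_of_comp_symm_eq hlam hmono hpos h).1,
    Fintype.sum_eq_single 1 fun ε hε =>
      if_neg fun h => hε (eq_one_and_eq_one_of_comp_symm_eq hlam hmono hpos h).2]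
  simp [eq_comm, pull_end]

lemma coeff_det_mul_stepPoly_pow_eq_zero (hsign : Equiv.Perm.sign σ * ∏ i, ε i = -1)
    {mu : Fin d → ℤ} (hmu : (signedPermCoords σ ε).symm mu = mu) (n : ℕ) :
    ((signedAlternantMatrix d lam).det * stepPoly d ^ n).coeff mu = 0 := by
  refine AddMonoidAlgebra.coeff_eq_zero_of_domCongr_eq_neg ?_ hmu
  rw [map_mul, map_pow, domCongr_signedPermCoords_det, domCongr_signedPermCoords_stepPoly, hsign]
  simp

lemma coeff_det_mul_stepPoly_pow_eq_zero_of_notMem {mu : Fin d → ℤ} (hmono : Antitone mu)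
    (hpos : 0 ≤ mu) (hmu : mu ∉ WeylChamber d) (n : ℕ) :
    ((signedAlternantMatrix d lam).det * stepPoly d ^ n).coeff mu = 0 := by
  have hwall : (∃ i j, i < j ∧ mu i = mu j) ∨ ∃ i, mu i = 0 := by
    simp only [WeylChamber, Set.mem_ofPred_eq, not_and_or, not_forall, not_lt] at hmu
    rcases hmu with ⟨i, j, hij, hle⟩ | ⟨i, hle⟩
    · exact .inl ⟨i, j, hij, le_antisymm hle (hmono hij.le)⟩
    · exact .inr ⟨i, le_antisymm hle (hpos i)⟩
  rcases hwall with ⟨i, j, hij, heq⟩ | ⟨i, hzero⟩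
  · refine coeff_det_mul_stepPoly_pow_eq_zero (σ := Equiv.swap i j) (ε := 1)
      (by simp [Equiv.Perm.sign_swap hij.ne]) (funext fun k => ?_) n
    rw [signedPermCoords_symm_apply, Pi.one_apply, Units.val_one, one_mul, Equiv.symm_swap,
      Equiv.swap_apply_def]
    split_ifs <;> simp_all
  · refine coeff_det_mul_stepPoly_pow_eq_zero (σ := 1) (ε := Pi.mulSingle i (-1))
      (by simp) (funext fun k => ?_) n
    change ((Pi.mulSingle i (-1) : Fin d → ℤˣ) k : ℤ) * mu k = mu k
    by_cases hki : k = i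
    · simp [hki, hzero]
    · simp [hki]

end Laurent

theorem coeff_laurent_eq_oscWalkCount (d : ℕ) (lam : Fin d → ℤ)
    (hlam : lam ∈ WeylChamber d) (n : ℕ)
    (mu : Fin d → ℤ) (hmono : ∀ i j : Fin d, i ≤ j → mu j ≤ mu i)
    (hpos : ∀ i, 0 ≤ mu i) :
    (AddMonoidAlgebra.coeff (Matrix.det (Matrix.of fun i j : Fin d =>
        laurentMono d (Pi.single i (lam j)) - laurentMono d (Pi.single i (-lam j))) *
      (∑ i : Fin d,
        (laurentMono d (Pi.single i 1) + laurentMono d (Pi.single i (-1)))) ^ n))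
      mu = (oscWalkCount d n lam mu : ℚ) := by
  change ((signedAlternantMatrix d lam).det * stepPoly d ^ n).coeff mu = _
  induction n generalizing mu with
  | zero =>
    rw [pow_zero, mul_one, coeff_det_signedAlternantMatrix hlam hmono hpos, oscWalkCount_zero hlam]
    split_ifs <;> simp
  | succ n ih =>
    by_cases hmu : mu ∈ WeylChamber d
    · rw [pow_succ, ← mul_assoc, coeff_mul_stepPoly, oscWalkCount_succ hmu, Nat.cast_sum]
      exact Finset.sum_congr rfl fun s _ =>
        ih _ (antitone_sub_unitStep hmu s) (nonneg_sub_unitStep hmu s)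
    · rw [coeff_det_mul_stepPoly_pow_eq_zero_of_notMem hmono hpos hmu,
        oscWalkCount_eq_zero_of_notMem hmu, Nat.cast_zero]
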